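/- Fix i ≥ 1, u ∈ [0,1), q ∈ (0,1), α > 0, and set p = α/K. Then K·I₂ → (α·i/ln 2)·∑_{j=2}^∞ [(1-q)^j/(j(j-1))]·e^{α(u^j−1)}·(u^j + j − j·u − 1) as K → ∞, and this limiting series converges. -/

import Mathlib

/-!
For fixed `j = m + 2` write `p = α / K` and `r(p) = (1 - p + p u) ^ j / (1 - p + p u ^ j)`. The
`j`-th summand of `K · I₂` is `(1 - q) ^ j / (j (j - 1))` times `(1 - p + p u ^ j) ^ K`, which tends
to `exp (α (u ^ j - 1))`, times `K (1 - r(p) ^ i)`. The latter is a difference quotient at `p = 0`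
of a function vanishing there, so it tends to `α · i · (u ^ j + j - j u - 1)`.
For `p ≤ 1/2`, Jensen (`r ≤ 1`) and Bernoulli (`1 - r ≤ 2 j p`, `1 - r ^ i ≤ i (1 - r)`) bound
the summands of `K · I₂` by `2 i α (1 - q) ^ j` uniformly in `K`, so Tannery's theorem lets the
limit pass under the sum, and the same bound makes the limiting series converge.
-/

open Filter

/-- The error term I₂ (series index j ≥ 2 written as j = m + 2). -/
noncomputable def I2 (K i : ℕ) (p u q : ℝ) : ℝ :=
  (1 / Real.log 2) *
    ∑' m : ℕ,
      (1 - q) ^ (m + 2) / ((m + 2) * (m + 1)) *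
        (1 - p + p * u ^ (m + 2)) ^ K *
        (1 - ((1 - p + p * u) ^ (m + 2) / (1 - p + p * u ^ (m + 2))) ^ i)

open Topology

lemma summable_of_tendsto_of_eventually_norm_le {α β G : Type*} {𝓕 : Filter α} [𝓕.NeBot]
    [NormedAddCommGroup G] [CompleteSpace G] {f : α → β → G} {g : β → G} {bound : β → ℝ}
    (h_sum : Summable bound) (hab : ∀ k, Tendsto (f · k) 𝓕 (𝓝 (g k)))
    (h_bound : ∀ᶠ n in 𝓕, ∀ k, ‖f n k‖ ≤ bound k) :
    Summable g :=
  h_sum.of_norm_bounded fun k ↦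
    le_of_tendsto (tendsto_norm.comp (hab k)) (h_bound.mono fun _ h ↦ h k)

theorem HasDerivAt.tendsto_natCast_mul_sub {f : ℝ → ℝ} {f' : ℝ} (hf : HasDerivAt f f' 0)
    (c : ℝ) : Tendsto (fun K : ℕ ↦ (K : ℝ) * (f (c / K) - f 0)) atTop (𝓝 (c * f')) := by
  have hfc : HasDerivAt (fun t ↦ f (c * t)) (f' * c) 0 :=
    (show HasDerivAt f f' (c * 0) by rwa [mul_zero]).comp 0 (hasDerivAt_const_mul c)
  have hinv : Tendsto (fun K : ℕ ↦ (K : ℝ)⁻¹) atTop (𝓝[≠] 0) :=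
    (tendsto_inv_atTop_nhdsGT_zero.comp tendsto_natCast_atTop_atTop).mono_right
      (nhdsGT_le_nhdsNE 0)
  rw [mul_comm]
  refine (hfc.tendsto_slope_zero.comp hinv).congr fun K ↦ ?_
  simp [div_eq_mul_inv]

lemma hasDerivAt_one_sub_add_mul (a x : ℝ) : HasDerivAt (fun p ↦ 1 - p + p * a) (a - 1) x :=
  (((hasDerivAt_id x).const_sub 1).add ((hasDerivAt_id x).mul_const a)).congr_deriv (by ring)

lemma hasDerivAt_one_sub_ratio_pow (i n : ℕ) (u : ℝ) :
    HasDerivAt (fun p ↦ 1 - ((1 - p + p * u) ^ n / (1 - p + p * u ^ n)) ^ i)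
      (i * (u ^ n + n - n * u - 1)) 0 := by
  have hA := (hasDerivAt_one_sub_add_mul u 0).pow n
  have hB := hasDerivAt_one_sub_add_mul (u ^ n) 0
  exact (((hA.div hB (by simp)).pow i).const_sub 1).congr_deriv (by
    simp only [Pi.div_apply, Pi.pow_apply, sub_zero, zero_mul, add_zero, one_pow, div_self,
      one_ne_zero, ne_eq, not_false_eq_true, mul_one, one_mul, div_one]
    ring)

lemma tendsto_natCast_mul_one_sub_ratio_pow (i n : ℕ) (u α : ℝ) :
    Tendsto (fun K : ℕ ↦ (K : ℝ) *
        (1 - ((1 - α / K + α / K * u) ^ n / (1 - α / K + α / K * u ^ n)) ^ i))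
      atTop (𝓝 (α * (i * (u ^ n + n - n * u - 1)))) := by
  simpa using (hasDerivAt_one_sub_ratio_pow i n u).tendsto_natCast_mul_sub α

lemma tendsto_one_sub_add_mul_pow_exp (a α : ℝ) :
    Tendsto (fun K : ℕ ↦ (1 - α / K + α / K * a) ^ K) atTop (𝓝 (Real.exp (α * (a - 1)))) :=
  (Real.tendsto_one_add_div_pow_exp (α * (a - 1))).congr fun K ↦ by ring_nf

section Bounds

variable {p u : ℝ}

lemma one_sub_add_mul_pow_le (hp0 : 0 ≤ p) (hp1 : p ≤ 1) (hu : 0 ≤ u) (n : ℕ) :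
    (1 - p + p * u) ^ n ≤ 1 - p + p * u ^ n := by
  have h := (convexOn_pow n).2 (Set.mem_Ici.2 zero_le_one) (Set.mem_Ici.2 hu)
    (sub_nonneg.2 hp1) hp0 (sub_add_cancel 1 p)
  simpa only [smul_eq_mul, mul_one, one_pow] using h

lemma one_sub_add_mul_pow_sub_le (hp0 : 0 ≤ p) (hp2 : p ≤ 2) (hu0 : 0 ≤ u) (hu1 : u ≤ 1)
    (n : ℕ) : (1 - p + p * u ^ n) - (1 - p + p * u) ^ n ≤ n * p := by
  have hBernoulli := one_add_mul_le_pow (a := p * (u - 1)) (by nlinarith) n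
  have hun : u ^ n ≤ 1 := pow_le_one₀ hu0 hu1
  have : 0 ≤ n * p * u := by positivity
  calc (1 - p + p * u ^ n) - (1 - p + p * u) ^ n
      ≤ (1 - p + p * u ^ n) - (1 + n * (p * (u - 1))) := by
        rw [show 1 - p + p * u = 1 + p * (u - 1) by ring]; linarith
    _ ≤ n * p := by nlinarith

lemma abs_one_sub_ratio_pow_le (hp0 : 0 ≤ p) (hp : p ≤ 1 / 2) (hu0 : 0 ≤ u) (hu1 : u ≤ 1)
    (i n : ℕ) :
    |1 - ((1 - p + p * u) ^ n / (1 - p + p * u ^ n)) ^ i| ≤ 2 * i * n * p := by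
  set A := (1 - p + p * u) ^ n
  set B := 1 - p + p * u ^ n
  have hB : 1 / 2 ≤ B := by have := mul_nonneg hp0 (pow_nonneg hu0 n); linarith
  have hAB : A ≤ B := one_sub_add_mul_pow_le hp0 (by linarith) hu0 n
  have hBA : B - A ≤ n * p := one_sub_add_mul_pow_sub_le hp0 (by linarith) hu0 hu1 n
  have hr0 : 0 ≤ A / B := div_nonneg (pow_nonneg (by nlinarith) n) (by linarith)
  have hr1 : A / B ≤ 1 := (div_le_one (by linarith)).2 hAB
  rw [abs_of_nonneg (sub_nonneg.2 (pow_le_one₀ hr0 hr1))]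
  calc 1 - (A / B) ^ i ≤ i * (1 - A / B) := by
        linarith [one_add_mul_sub_le_pow (by linarith : -1 ≤ A / B) i]
    _ = i * ((B - A) / B) := by field_simp
    _ ≤ i * ((B - A) / (1 / 2)) := by gcongr
    _ ≤ 2 * i * n * p := by nlinarith [(Nat.cast_nonneg i : (0 : ℝ) ≤ i)]

end Bounds

noncomputable def I2Term (K i : ℕ) (p u q : ℝ) (m : ℕ) : ℝ :=
  (1 - q) ^ (m + 2) / ((m + 2) * (m + 1)) *
    (1 - p + p * u ^ (m + 2)) ^ K *
    (1 - ((1 - p + p * u) ^ (m + 2) / (1 - p + p * u ^ (m + 2))) ^ i)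

noncomputable def I2LimitTerm (u q α : ℝ) (m : ℕ) : ℝ :=
  (1 - q) ^ (m + 2) / ((m + 2) * (m + 1)) *
    Real.exp (α * (u ^ (m + 2) - 1)) *
    (u ^ (m + 2) + (m + 2) - (m + 2) * u - 1)

lemma tendsto_natCast_mul_I2Term (i : ℕ) (u q α : ℝ) (m : ℕ) :
    Tendsto (fun K : ℕ ↦ (K : ℝ) * I2Term K i (α / K) u q m) atTop
      (𝓝 (α * i * I2LimitTerm u q α m)) := by
  have h := ((tendsto_one_sub_add_mul_pow_exp (u ^ (m + 2)) α).mul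
    (tendsto_natCast_mul_one_sub_ratio_pow i (m + 2) u α)).const_mul
    ((1 - q) ^ (m + 2) / ((m + 2) * (m + 1)))
  simp only [I2Term, I2LimitTerm]
  convert h using 2 <;> push_cast <;> ring

lemma eventually_norm_natCast_mul_I2Term_le {u q α : ℝ} (i : ℕ) (hu0 : 0 ≤ u) (hu1 : u ≤ 1)
    (hq : q ≤ 1) (hα : 0 < α) :
    ∀ᶠ K : ℕ in atTop, ∀ m,
      ‖(K : ℝ) * I2Term K i (α / K) u q m‖ ≤ 2 * i * α * (1 - q) ^ (m + 2) := by
  filter_upwards [eventually_gt_atTop 0, (tendsto_const_div_atTop_nhds_zero_nat α).eventually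
    (eventually_le_nhds (by norm_num : (0 : ℝ) < 1 / 2))] with K hK hp m
  set p := α / K with hp_def
  have hp0 : 0 ≤ p := by positivity
  have hc0 : 0 ≤ (1 - q) ^ (m + 2) / ((m + 2) * (m + 1)) :=
    div_nonneg (pow_nonneg (sub_nonneg.2 hq) _) (by positivity)
  have hun : u ^ (m + 2) ≤ 1 := pow_le_one₀ hu0 hu1
  have hB : |1 - p + p * u ^ (m + 2)| ≤ 1 :=
    abs_le.2 ⟨by nlinarith [pow_nonneg hu0 (m + 2)], by nlinarith⟩
  have hs := abs_one_sub_ratio_pow_le hp0 hp hu0 hu1 i (m + 2)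
  rw [I2Term, norm_mul, norm_mul, norm_mul, Real.norm_natCast, norm_pow, Real.norm_of_nonneg hc0]
  calc (K : ℝ) * ((1 - q) ^ (m + 2) / ((m + 2) * (m + 1)) * ‖1 - p + p * u ^ (m + 2)‖ ^ K *
        ‖1 - ((1 - p + p * u) ^ (m + 2) / (1 - p + p * u ^ (m + 2))) ^ i‖)
      ≤ K * ((1 - q) ^ (m + 2) / ((m + 2) * (m + 1)) * 1 * (2 * i * (m + 2 : ℕ) * p)) := by
        gcongr
        · exact pow_le_one₀ (norm_nonneg _) hB
        · exact hs
    _ = 2 * i * α * ((1 - q) ^ (m + 2) / ((m + 2) * (m + 1)) * (m + 2)) := by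
        rw [hp_def]; field_simp; push_cast; ring
    _ = 2 * i * α * ((1 - q) ^ (m + 2) / (m + 1)) := by field_simp
    _ ≤ 2 * i * α * (1 - q) ^ (m + 2) := by
        gcongr
        exact div_le_self (pow_nonneg (sub_nonneg.2 hq) _) (by simp)

/-- With p = α/K, K·I₂ converges as K → ∞ to
(α·i/ln 2)·∑_{j=2}^∞ [(1-q)^j/(j(j-1))]·e^{α(u^j−1)}·(u^j + j − ju − 1),
and the limiting series converges. -/
theorem KI2_tendsto (i : ℕ) (hi : 1 ≤ i) (u q α : ℝ)
    (hu : u ∈ Set.Ico (0:ℝ) 1) (hq : q ∈ Set.Ioo (0:ℝ) 1) (hα : 0 < α) :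
    Summable (fun m : ℕ =>
        (1 - q) ^ (m + 2) / ((m + 2) * (m + 1)) *
          Real.exp (α * (u ^ (m + 2) - 1)) *
          (u ^ (m + 2) + (m + 2) - (m + 2) * u - 1))
    ∧ Tendsto (fun K : ℕ => (K : ℝ) * I2 K i (α / K) u q) atTop
        (nhds (α * i / Real.log 2 *
          ∑' m : ℕ,
            (1 - q) ^ (m + 2) / ((m + 2) * (m + 1)) *
              Real.exp (α * (u ^ (m + 2) - 1)) *
              (u ^ (m + 2) + (m + 2) - (m + 2) * u - 1))) := by
  obtain ⟨hu0, hu1⟩ := hu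
  obtain ⟨hq0, hq1⟩ := hq
  have hbound : Summable fun m : ℕ ↦ 2 * i * α * (1 - q) ^ (m + 2) :=
    ((summable_geometric_of_lt_one (by linarith) (by linarith)).comp_injective
      (add_left_injective 2)).mul_left _
  have hlim := tendsto_natCast_mul_I2Term i u q α
  have hdom := eventually_norm_natCast_mul_I2Term_le i hu0 hu1.le hq1.le hα
  have hαi : α * i ≠ 0 := mul_ne_zero hα.ne' (by positivity)
  refine ⟨(summable_mul_left_iff hαi).1
    (summable_of_tendsto_of_eventually_norm_le hbound hlim hdom), ?_⟩
  convert (tendsto_tsum_of_dominated_convergence hbound hlim hdom).const_mul (1 / Real.log 2)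
    using 2 with K
  · simp only [I2, I2Term, tsum_mul_left]
    ring
  · simp only [I2LimitTerm, tsum_mul_left]
    ring
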